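/- arXiv:cs/0608020 — 2 statements merged into one kernel-verified Lean document; each statement's English description precedes it below -/
import Mathlib

section
/- Let ≺ be a well-founded relation on a type A, and for a fixed k define the product extension on k-tuples: (m₁,…,m_k) ≺^p (n₁,…,n_k) iff mᵢ ⪯ nᵢ for all i (where ⪯ is the reflexive closure of ≺) and m_j ≺ n_j for some j. If ≺ is also transitive, then ≺^p is a well-founded relation on A^k. -/
theorem product_extension_wf {A : Type*} (r : A → A → Prop)
    (hwf : WellFounded r) (htrans : Transitive r) (k : ℕ) :
    WellFounded (fun m n : Fin k → A =>
      (∀ i, r (m i) (n i) ∨ m i = n i) ∧ ∃ j, r (m j) (n j)) := by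
  have hasymm : ∀ {a b : A}, r a b → ¬ r b a := fun h h' =>
    (hwf.isIrrefl.irrefl _) (htrans h h')
  have hirr : ∀ a : A, ¬ r a a := fun a h => (hwf.isIrrefl.irrefl _) h
  letI : PartialOrder A :=
  { lt := r
    le := fun a b => r a b ∨ a = b
    le_refl := fun a => Or.inr rfl
    le_trans := by
      rintro a b c (h | rfl) (h' | rfl)
      · exact Or.inl (htrans h h')
      · exact Or.inl h
      · exact Or.inl h'
      · exact Or.inr rfl
    lt_iff_le_not_ge := by
      intro a b
      constructor
      · intro h
        refine ⟨Or.inl h, ?_⟩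
        rintro (h' | rfl)
        · exact hasymm h h'
        · exact hirr _ h
      · rintro ⟨h | rfl, h'⟩
        · exact h
        · exact absurd (Or.inr rfl) h'
    le_antisymm := by
      rintro a b (h | rfl) h'
      · rcases h' with h' | rfl
        · exact absurd (htrans h h') (hirr _)
        · exact absurd h (hirr _)
      · rfl }
  haveI : WellFoundedLT A := ⟨hwf⟩
  have hpi : WellFounded ((· < ·) : (Fin k → A) → (Fin k → A) → Prop) :=
    (Pi.wellFoundedLT).wf
  refine Subrelation.wf ?_ hpi
  rintro m n ⟨hall, j, hj⟩
  rw [lt_iff_le_not_ge]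
  refine ⟨fun i => hall i, fun hle => ?_⟩
  rcases hle j with h | h
  · exact hasymm hj h
  · exact hirr _ (h ▸ hj)
end

section
/- Let T be the type of binary trees with natural-number leaves: tip : ℕ → T and node : T → T → T, with size |tip u| = 1 and |node l r| = 1 + |l| + |r|. Define f : T → T → T by f (node x y) (node x' y') = node (f x y) (f x' y'), f (node x y) (tip u) = tip u, f (tip u) (node x y) = tip u, and f (tip u) (tip v) = tip (q u v) where q : ℕ → ℕ → ℕ is any function. Then f is total (the recursion terminates, since |x| + |y| < |node x y| + |node x' y'|) and for all trees s, t, |f s t| ≤ |s| + |t|. -/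
inductive NTree where
  | tip : ℕ → NTree
  | node : NTree → NTree → NTree

def NTree.size : NTree → ℕ
  | .tip _ => 1
  | .node l r => 1 + l.size + r.size

def treeF (q : ℕ → ℕ → ℕ) : NTree → NTree → NTree
  | .node x y, .node x' y' => .node (treeF q x y) (treeF q x' y')
  | .node _ _, .tip u => .tip u
  | .tip u, .node _ _ => .tip u
  | .tip u, .tip v => .tip (q u v)
termination_by s t => s.size + t.size
decreasing_by
  all_goals simp [NTree.size]; omega


theorem treeF_size_bound (q : ℕ → ℕ → ℕ) :
    ∀ s t : NTree, (treeF q s t).size ≤ s.size + t.size := by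
  intro s t
  induction s, t using treeF.induct with
  | case1 x y x' y' ihLeft ihRight =>
    simp only [treeF, NTree.size]
    omega
  | case2 | case3 | case4 =>
    simp only [treeF, NTree.size]
    omega
end
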